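/- arXiv:2601.01648 — 3 statements merged into one kernel-verified Lean document; each statement's English description precedes it below -/
import Mathlib

section
/- Let k be a field, S = k[x_1,...,x_n], and J1, J2 ideals of S such that dim_k S/J1 = dim_k S/J2 = d and there exists a surjective S-linear map (S/J1) ⊗_S (S/J2) → M3 with dim_k M3 = d. Then J1 = J2 and the surjection is an isomorphism. -/
open TensorProduct

lemma aux_smul_one_quot {R : Type*} [CommRing R] (J : Ideal R) (a : R) :
    a • (1 : R ⧸ J) = Ideal.Quotient.mk J a := by
  rw [← map_one (Ideal.Quotient.mk J), ← Ideal.Quotient.mk_eq_mk, ← Submodule.Quotient.mk_smul]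
  simp

set_option maxHeartbeats 1000000 in
set_option synthInstance.maxHeartbeats 200000 in
/-- Let `k` be a field, `S = k[x₁,…,xₙ]`, and `J₁, J₂` ideals of `S` with
`dim_k S/J₁ = dim_k S/J₂ = d`. If there is a surjective `S`-linear map
`(S/J₁) ⊗[S] (S/J₂) → M₃` with `dim_k M₃ = d`, then `J₁ = J₂` and the
surjection is an isomorphism. -/
theorem tensor_surjection_of_equal_dims {k : Type*} [Field k] {n d : ℕ}
    (J1 J2 : Ideal (MvPolynomial (Fin n) k))
    [Module.Finite k (MvPolynomial (Fin n) k ⧸ J1)]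
    [Module.Finite k (MvPolynomial (Fin n) k ⧸ J2)]
    (h1 : Module.finrank k (MvPolynomial (Fin n) k ⧸ J1) = d)
    (h2 : Module.finrank k (MvPolynomial (Fin n) k ⧸ J2) = d)
    {M3 : Type*} [AddCommGroup M3] [Module (MvPolynomial (Fin n) k) M3]
    [Module k M3] [IsScalarTower k (MvPolynomial (Fin n) k) M3]
    [Module.Finite k M3] (h3 : Module.finrank k M3 = d)
    (π : ((MvPolynomial (Fin n) k ⧸ J1) ⊗[MvPolynomial (Fin n) k]
        (MvPolynomial (Fin n) k ⧸ J2)) →ₗ[MvPolynomial (Fin n) k] M3)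
    (hπ : Function.Surjective π) :
    J1 = J2 ∧ Function.Bijective π := by
  set S := MvPolynomial (Fin n) k
  set A := S ⧸ J1
  set B := S ⧸ J2
  let f : A →ₗ[S] A ⊗[S] B := (TensorProduct.mk S A B).flip 1
  let g : B →ₗ[S] A ⊗[S] B := TensorProduct.mk S A B 1
  have hfdef : ∀ x : A, f x = x ⊗ₜ[S] (1 : B) := fun x => rfl
  have hgdef : ∀ y : B, g y = (1 : A) ⊗ₜ[S] y := fun y => rfl
  have hf : Function.Surjective f := by
    intro t
    induction t using TensorProduct.induction_on with
    | zero => exact ⟨0, f.map_zero⟩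
    | tmul x y =>
      obtain ⟨s, rfl⟩ := Ideal.Quotient.mk_surjective y
      refine ⟨s • x, ?_⟩
      rw [hfdef, TensorProduct.smul_tmul, aux_smul_one_quot]
    | add x y hx hy =>
      obtain ⟨a, rfl⟩ := hx
      obtain ⟨b, rfl⟩ := hy
      exact ⟨a + b, map_add f a b⟩
  have hg : Function.Surjective g := by
    intro t
    induction t using TensorProduct.induction_on with
    | zero => exact ⟨0, g.map_zero⟩
    | tmul x y =>
      obtain ⟨s, rfl⟩ := Ideal.Quotient.mk_surjective x
      refine ⟨s • y, ?_⟩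
      rw [hgdef, ← TensorProduct.smul_tmul, aux_smul_one_quot]
    | add x y hx hy =>
      obtain ⟨a, rfl⟩ := hx
      obtain ⟨b, rfl⟩ := hy
      exact ⟨a + b, map_add g a b⟩
  have hT : Module.Finite k (A ⊗[S] B) :=
    Module.Finite.of_surjective (f.restrictScalars k) hf
  have hinjf : Function.Injective ((π.restrictScalars k) ∘ₗ (f.restrictScalars k)) :=
    (LinearMap.injective_iff_surjective_of_finrank_eq_finrank (by rw [h1, h3])).mpr (hπ.comp hf)
  have hinjg : Function.Injective ((π.restrictScalars k) ∘ₗ (g.restrictScalars k)) :=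
    (LinearMap.injective_iff_surjective_of_finrank_eq_finrank (by rw [h2, h3])).mpr (hπ.comp hg)
  have hfinj : Function.Injective f := fun a b hab =>
    hinjf (by simpa [LinearMap.comp_apply] using congrArg π hab)
  have hginj : Function.Injective g := fun a b hab =>
    hinjg (by simpa [LinearMap.comp_apply] using congrArg π hab)
  have hπinj : Function.Injective π := by
    intro t1 t2 ht
    obtain ⟨a, rfl⟩ := hf t1
    obtain ⟨b, rfl⟩ := hf t2
    exact congrArg f (hinjf ht)
  refine ⟨le_antisymm ?_ ?_, hπinj, hπ⟩
  · intro a ha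
    have h0 : g (Ideal.Quotient.mk J2 a) = g 0 := by
      rw [hgdef, map_zero, ← aux_smul_one_quot, TensorProduct.tmul_smul,
        TensorProduct.smul_tmul', aux_smul_one_quot,
        Ideal.Quotient.eq_zero_iff_mem.mpr ha, TensorProduct.zero_tmul]
    exact Ideal.Quotient.eq_zero_iff_mem.mp (hginj h0)
  · intro a ha
    have h0 : f (Ideal.Quotient.mk J1 a) = f 0 := by
      rw [hfdef, map_zero, ← aux_smul_one_quot, TensorProduct.smul_tmul,
        aux_smul_one_quot, Ideal.Quotient.eq_zero_iff_mem.mpr ha, TensorProduct.tmul_zero]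
    exact Ideal.Quotient.eq_zero_iff_mem.mp (hfinj h0)
end

section
/- Let k be a field and S = k[x]. The multiplication tensor of the algebra k[x]/(x^2), namely μ = β1* ⊗ β1* ⊗ β1 + β1* ⊗ β2* ⊗ β2 + β2* ⊗ β1* ⊗ β2 in (k^2)∨ ⊗ (k^2)∨ ⊗ k^2 (where β1, β2 is the basis corresponding to 1, x), has tensor rank 3. -/
open TensorProduct

private theorem key_scalar {k : Type*} [Field k] (f g h j P Q : Fin 2 → k)
    (compat : ∀ i, f i * j i = g i * h i)
    (e1 : f 0 * P 0 + f 1 * P 1 = 1) (e2 : f 0 * Q 0 + f 1 * Q 1 = 0)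
    (e3 : g 0 * P 0 + g 1 * P 1 = 0) (e4 : g 0 * Q 0 + g 1 * Q 1 = 1)
    (e5 : h 0 * P 0 + h 1 * P 1 = 0) (e6 : h 0 * Q 0 + h 1 * Q 1 = 0)
    (e7 : j 0 * P 0 + j 1 * P 1 = 1) (e8 : j 0 * Q 0 + j 1 * Q 1 = 0) : False := by
  have hdet : (f 0 * g 1 - f 1 * g 0) * (P 0 * Q 1 - P 1 * Q 0) = 1 := by
    linear_combination (g 0 * Q 0 + g 1 * Q 1) * e1 - (g 0 * P 0 + g 1 * P 1) * e2 + e4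
  have hM : P 0 * Q 1 - P 1 * Q 0 ≠ 0 := by
    intro h0; rw [h0, mul_zero] at hdet; exact one_ne_zero hdet.symm
  have h0 : h 0 = 0 := by
    have : h 0 * (P 0 * Q 1 - P 1 * Q 0) = 0 := by linear_combination Q 1 * e5 - P 1 * e6
    exact (mul_eq_zero.mp this).resolve_right hM
  have h1 : h 1 = 0 := by
    have : h 1 * (P 0 * Q 1 - P 1 * Q 0) = 0 := by linear_combination P 0 * e6 - Q 0 * e5
    exact (mul_eq_zero.mp this).resolve_right hM
  have c0 : f 0 * j 0 = 0 := by rw [compat 0, h0, mul_zero]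
  have c1 : f 1 * j 1 = 0 := by rw [compat 1, h1, mul_zero]
  rcases eq_or_ne (j 0) 0 with hj0 | hj0
  · rcases eq_or_ne (j 1) 0 with hj1 | hj1
    · rw [hj0, hj1] at e7; simp at e7
    · have hf1 : f 1 = 0 := (mul_eq_zero.mp c1).resolve_right hj1
      have hf0 : f 0 ≠ 0 := by
        intro h'; rw [hf1, h'] at e1; simp at e1
      have hQ0 : Q 0 = 0 := by
        have : f 0 * Q 0 = 0 := by linear_combination e2 - Q 1 * hf1
        exact (mul_eq_zero.mp this).resolve_left hf0
      have hQ1 : Q 1 = 0 := by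
        have : j 1 * Q 1 = 0 := by linear_combination e8 - Q 0 * hj0
        exact (mul_eq_zero.mp this).resolve_left hj1
      rw [hQ0, hQ1] at e4; simp at e4
  · have hf0 : f 0 = 0 := (mul_eq_zero.mp c0).resolve_right hj0
    have hf1 : f 1 ≠ 0 := by
      intro h'; rw [hf0, h'] at e1; simp at e1
    have hQ1 : Q 1 = 0 := by
      have : f 1 * Q 1 = 0 := by linear_combination e2 - Q 0 * hf0
      exact (mul_eq_zero.mp this).resolve_left hf1
    have hQ0 : Q 0 = 0 := by
      have : j 0 * Q 0 = 0 := by linear_combination e8 - j 1 * hQ1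
      exact (mul_eq_zero.mp this).resolve_left hj0
    rw [hQ0, hQ1] at e4; simp at e4

private theorem pad_mul {k : Type*} [Field k] {r : ℕ} (hr : r ≤ 2) (t s : Fin r → k) :
    ∑ i : Fin 2, ((if h : (i : ℕ) < r then t ⟨i, h⟩ else 0) *
      (if h : (i : ℕ) < r then s ⟨i, h⟩ else 0)) = ∑ i : Fin r, t i * s i := by
  have step : ∀ i : Fin 2, (if h : (i : ℕ) < r then t ⟨i, h⟩ else 0) *
      (if h : (i : ℕ) < r then s ⟨i, h⟩ else 0)
      = (fun n : ℕ => if h : n < r then t ⟨n, h⟩ * s ⟨n, h⟩ else 0) (i : ℕ) := by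
    intro i; by_cases h : (i : ℕ) < r <;> simp [h]
  rw [Finset.sum_congr rfl (fun i _ => step i),
    Fin.sum_univ_eq_sum_range (fun n : ℕ => if h : n < r then t ⟨n, h⟩ * s ⟨n, h⟩ else 0) 2,
    ← Finset.sum_subset (Finset.range_subset_range.mpr hr)
      (fun x _ hx => dif_neg (by simpa using hx)),
    ← Fin.sum_univ_eq_sum_range (fun n : ℕ => if h : n < r then t ⟨n, h⟩ * s ⟨n, h⟩ else 0) r]
  exact Finset.sum_congr rfl fun i _ => by simp

private theorem lower_bound {k : Type*} [Field k] (r : ℕ) (hr : r ≤ 2)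
    (a b' : Fin r → Module.Dual k (Fin 2 → k)) (c : Fin r → (Fin 2 → k))
    (hμ : ((Pi.basisFun k (Fin 2)).dualBasis 0 ⊗ₜ[k]
        ((Pi.basisFun k (Fin 2)).dualBasis 0 ⊗ₜ[k] Pi.basisFun k (Fin 2) 0) +
        (Pi.basisFun k (Fin 2)).dualBasis 0 ⊗ₜ[k]
        ((Pi.basisFun k (Fin 2)).dualBasis 1 ⊗ₜ[k] Pi.basisFun k (Fin 2) 1) +
        (Pi.basisFun k (Fin 2)).dualBasis 1 ⊗ₜ[k]
        ((Pi.basisFun k (Fin 2)).dualBasis 0 ⊗ₜ[k] Pi.basisFun k (Fin 2) 1))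
      = ∑ i, a i ⊗ₜ[k] (b' i ⊗ₜ[k] c i)) : False := by
  let S : Module.Dual k (Fin 2 → k) ⊗[k] (Module.Dual k (Fin 2 → k) ⊗[k] (Fin 2 → k)) →ₗ[k]
      (Fin 2 → k) →ₗ[k] (Fin 2 → k) →ₗ[k] (Fin 2 → k) :=
    (dualTensorHom k (Fin 2 → k) ((Fin 2 → k) →ₗ[k] (Fin 2 → k))).comp
      ((dualTensorHom k (Fin 2 → k) (Fin 2 → k)).lTensor (Module.Dual k (Fin 2 → k)))
  have E000 := congrArg (fun t => S t (Pi.basisFun k (Fin 2) 0) (Pi.basisFun k (Fin 2) 0) 0) hμ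
  have E001 := congrArg (fun t => S t (Pi.basisFun k (Fin 2) 0) (Pi.basisFun k (Fin 2) 0) 1) hμ
  have E010 := congrArg (fun t => S t (Pi.basisFun k (Fin 2) 0) (Pi.basisFun k (Fin 2) 1) 0) hμ
  have E011 := congrArg (fun t => S t (Pi.basisFun k (Fin 2) 0) (Pi.basisFun k (Fin 2) 1) 1) hμ
  have E100 := congrArg (fun t => S t (Pi.basisFun k (Fin 2) 1) (Pi.basisFun k (Fin 2) 0) 0) hμ
  have E101 := congrArg (fun t => S t (Pi.basisFun k (Fin 2) 1) (Pi.basisFun k (Fin 2) 0) 1) hμ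
  have E110 := congrArg (fun t => S t (Pi.basisFun k (Fin 2) 1) (Pi.basisFun k (Fin 2) 1) 0) hμ
  have E111 := congrArg (fun t => S t (Pi.basisFun k (Fin 2) 1) (Pi.basisFun k (Fin 2) 1) 1) hμ
  simp only [S, map_sum, map_add, LinearMap.coe_comp, Function.comp_apply, LinearMap.lTensor_tmul,
    dualTensorHom_apply, LinearMap.sum_apply, LinearMap.smul_apply, LinearMap.add_apply,
    Finset.sum_apply, Pi.smul_apply, smul_eq_mul, Module.Basis.dualBasis_apply_self, Pi.add_apply,
    Pi.basisFun_apply, Pi.single_apply] at E000 E001 E010 E011 E100 E101 E110 E111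
  norm_num at E000 E001 E010 E011 E100 E101 E110 E111
  -- padded scalar data
  set u0 : Fin 2 → k := Pi.single 0 1 with hu0
  set u1 : Fin 2 → k := Pi.single 1 1 with hu1
  refine key_scalar
    (fun i => if h : (i : ℕ) < r then a ⟨i, h⟩ u0 * c ⟨i, h⟩ 0 else 0)
    (fun i => if h : (i : ℕ) < r then a ⟨i, h⟩ u0 * c ⟨i, h⟩ 1 else 0)
    (fun i => if h : (i : ℕ) < r then a ⟨i, h⟩ u1 * c ⟨i, h⟩ 0 else 0)
    (fun i => if h : (i : ℕ) < r then a ⟨i, h⟩ u1 * c ⟨i, h⟩ 1 else 0)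
    (fun i => if h : (i : ℕ) < r then b' ⟨i, h⟩ u0 else 0)
    (fun i => if h : (i : ℕ) < r then b' ⟨i, h⟩ u1 else 0)
    (fun i => by by_cases h : (i : ℕ) < r <;> simp [h] <;> ring) ?_ ?_ ?_ ?_ ?_ ?_ ?_ ?_
  · have hp := pad_mul hr (fun i => a i u0 * c i 0) (fun i => b' i u0)
    rw [Fin.sum_univ_two] at hp
    exact hp.trans ((Finset.sum_congr rfl fun i _ => by ring).trans E000.symm)
  · have hp := pad_mul hr (fun i => a i u0 * c i 0) (fun i => b' i u1)
    rw [Fin.sum_univ_two] at hp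
    exact hp.trans ((Finset.sum_congr rfl fun i _ => by ring).trans E010.symm)
  · have hp := pad_mul hr (fun i => a i u0 * c i 1) (fun i => b' i u0)
    rw [Fin.sum_univ_two] at hp
    exact hp.trans ((Finset.sum_congr rfl fun i _ => by ring).trans E001.symm)
  · have hp := pad_mul hr (fun i => a i u0 * c i 1) (fun i => b' i u1)
    rw [Fin.sum_univ_two] at hp
    exact hp.trans ((Finset.sum_congr rfl fun i _ => by ring).trans E011.symm)
  · have hp := pad_mul hr (fun i => a i u1 * c i 0) (fun i => b' i u0)
    rw [Fin.sum_univ_two] at hp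
    exact hp.trans ((Finset.sum_congr rfl fun i _ => by ring).trans E100.symm)
  · have hp := pad_mul hr (fun i => a i u1 * c i 0) (fun i => b' i u1)
    rw [Fin.sum_univ_two] at hp
    exact hp.trans ((Finset.sum_congr rfl fun i _ => by ring).trans E110.symm)
  · have hp := pad_mul hr (fun i => a i u1 * c i 1) (fun i => b' i u0)
    rw [Fin.sum_univ_two] at hp
    exact hp.trans ((Finset.sum_congr rfl fun i _ => by ring).trans E101.symm)
  · have hp := pad_mul hr (fun i => a i u1 * c i 1) (fun i => b' i u1)
    rw [Fin.sum_univ_two] at hp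
    exact hp.trans ((Finset.sum_congr rfl fun i _ => by ring).trans E111.symm)

/-- The multiplication tensor of `k[x]/(x²)`, namely
`μ = β₁* ⊗ β₁* ⊗ β₁ + β₁* ⊗ β₂* ⊗ β₂ + β₂* ⊗ β₁* ⊗ β₂` in `(k²)∨ ⊗ (k²)∨ ⊗ k²`,
has tensor rank exactly 3: it is a sum of 3 simple tensors, and every expression of it
as a sum of simple tensors uses at least 3 of them. -/
theorem mult_tensor_of_dual_numbers_has_rank_three
    {k : Type*} [Field k] [IsAlgClosed k] :
    letI V := Fin 2 → k
    letI e : Module.Basis (Fin 2) k V := Pi.basisFun k (Fin 2)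
    letI b : Fin 2 → Module.Dual k V := e.dualBasis
    letI μ : Module.Dual k V ⊗[k] (Module.Dual k V ⊗[k] V) :=
      b 0 ⊗ₜ[k] (b 0 ⊗ₜ[k] e 0) + b 0 ⊗ₜ[k] (b 1 ⊗ₜ[k] e 1) +
        b 1 ⊗ₜ[k] (b 0 ⊗ₜ[k] e 1)
    (∃ (a : Fin 3 → Module.Dual k V) (b' : Fin 3 → Module.Dual k V)
        (c : Fin 3 → V), μ = ∑ i, a i ⊗ₜ[k] (b' i ⊗ₜ[k] c i)) ∧
      (∀ (r : ℕ) (a : Fin r → Module.Dual k V) (b' : Fin r → Module.Dual k V)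
        (c : Fin r → V), μ = ∑ i, a i ⊗ₜ[k] (b' i ⊗ₜ[k] c i) → 3 ≤ r) := by
  constructor
  · refine ⟨![(Pi.basisFun k (Fin 2)).dualBasis 0, (Pi.basisFun k (Fin 2)).dualBasis 0,
      (Pi.basisFun k (Fin 2)).dualBasis 1],
      ![(Pi.basisFun k (Fin 2)).dualBasis 0, (Pi.basisFun k (Fin 2)).dualBasis 1,
      (Pi.basisFun k (Fin 2)).dualBasis 0],
      ![Pi.basisFun k (Fin 2) 0, Pi.basisFun k (Fin 2) 1, Pi.basisFun k (Fin 2) 1], ?_⟩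
    simp [Fin.sum_univ_three]
  · intro r a b' c hμ
    by_contra hlt
    exact lower_bound r (by omega) a b' c hμ
end

section
/- The image of the set of tensors of rank at most 2 in k^2 ⊗ k^2 ⊗ k^2 is dense: the second secant variety of the Segre embedding of P^1 × P^1 × P^1 equals all of P^7. Equivalently, every tensor in k^2 ⊗ k^2 ⊗ k^2 has border rank at most 2. -/
section SegreAux

variable {k : Type*} [Field k]

lemma segre_aux (T000 T001 T010 T011 T100 T101 T110 T111 l0 l1 : k)
    (hd : l1 - l0 ≠ 0)
    (hA0 : T001 - l0 * T000 ≠ 0) (hA1 : T001 - l1 * T000 ≠ 0)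
    (h0 : (T001 - l0 * T000) * (T111 - l0 * T110) - (T011 - l0 * T010) * (T101 - l0 * T100) = 0)
    (h1 : (T001 - l1 * T000) * (T111 - l1 * T110) - (T011 - l1 * T010) * (T101 - l1 * T100) = 0) :
    ∃ a b c : Fin 2 → Fin 2 → k,
      (T000 = a 0 0 * b 0 0 * c 0 0 + a 1 0 * b 1 0 * c 1 0) ∧
      (T001 = a 0 0 * b 0 0 * c 0 1 + a 1 0 * b 1 0 * c 1 1) ∧
      (T010 = a 0 0 * b 0 1 * c 0 0 + a 1 0 * b 1 1 * c 1 0) ∧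
      (T011 = a 0 0 * b 0 1 * c 0 1 + a 1 0 * b 1 1 * c 1 1) ∧
      (T100 = a 0 1 * b 0 0 * c 0 0 + a 1 1 * b 1 0 * c 1 0) ∧
      (T101 = a 0 1 * b 0 0 * c 0 1 + a 1 1 * b 1 0 * c 1 1) ∧
      (T110 = a 0 1 * b 0 1 * c 0 0 + a 1 1 * b 1 1 * c 1 0) ∧
      (T111 = a 0 1 * b 0 1 * c 0 1 + a 1 1 * b 1 1 * c 1 1) := by
  obtain ⟨d, ed⟩ : ∃ d, l1 - l0 = d := ⟨_, rfl⟩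
  obtain ⟨A0, e0⟩ : ∃ A0, T001 - l0 * T000 = A0 := ⟨_, rfl⟩
  obtain ⟨A1, e1⟩ : ∃ A1, T001 - l1 * T000 = A1 := ⟨_, rfl⟩
  rw [ed] at hd; rw [e0] at hA0; rw [e1] at hA1
  refine ⟨![![T001 - l0 * T000, T101 - l0 * T100], ![T001 - l1 * T000, T101 - l1 * T100]],
          ![![T001 - l0 * T000, T011 - l0 * T010], ![T001 - l1 * T000, T011 - l1 * T010]],
          ![![1 / (d * A0), l1 / (d * A0)], ![-1 / (d * A1), -l0 / (d * A1)]],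
          ?_, ?_, ?_, ?_, ?_, ?_, ?_, ?_⟩ <;>
    simp only [Matrix.cons_val_zero, Matrix.cons_val_one, Matrix.head_cons] <;>
    field_simp [hd, hA0, hA1] <;>
    subst ed e0 e1
  · ring
  · ring
  · ring
  · ring
  · ring
  · ring
  · linear_combination ((T001 - l1*T000)) * h0 - ((T001 - l0*T000)) * h1
  · linear_combination (l1*(T001 - l1*T000)) * h0 - (l0*(T001 - l0*T000)) * h1

lemma segre_key (t : Fin 2 × Fin 2 × Fin 2 → k) (l0 l1 : k)
    (hd : l1 - l0 ≠ 0)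
    (hA0 : t (0,0,1) - l0 * t (0,0,0) ≠ 0) (hA1 : t (0,0,1) - l1 * t (0,0,0) ≠ 0)
    (h0 : (t (0,0,1) - l0 * t (0,0,0)) * (t (1,1,1) - l0 * t (1,1,0))
        - (t (0,1,1) - l0 * t (0,1,0)) * (t (1,0,1) - l0 * t (1,0,0)) = 0)
    (h1 : (t (0,0,1) - l1 * t (0,0,0)) * (t (1,1,1) - l1 * t (1,1,0))
        - (t (0,1,1) - l1 * t (0,1,0)) * (t (1,0,1) - l1 * t (1,0,0)) = 0) :
    ∃ a b c : Fin 2 → Fin 2 → k, ∀ p,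
      t p = a 0 p.1 * b 0 p.2.1 * c 0 p.2.2 + a 1 p.1 * b 1 p.2.1 * c 1 p.2.2 := by
  obtain ⟨a, b, c, H1, H2, H3, H4, H5, H6, H7, H8⟩ :=
    segre_aux (t (0,0,0)) (t (0,0,1)) (t (0,1,0)) (t (0,1,1)) (t (1,0,0)) (t (1,0,1))
      (t (1,1,0)) (t (1,1,1)) l0 l1 hd hA0 hA1 h0 h1
  refine ⟨a, b, c, fun p => ?_⟩
  fin_cases p
  · exact H1
  · exact H2
  · exact H3
  · exact H4
  · exact H5
  · exact H6
  · exact H7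
  · exact H8

/-- The generic decomposition: if the first slice is invertible, the pencil has distinct
eigenvalues, and the relevant corner entries are nonzero, the tensor has rank at most 2. -/
lemma segre_generic [IsAlgClosed k] (x : Fin 2 × Fin 2 × Fin 2 → k)
    (hA : x (0,0,0) * x (1,1,0) - x (0,1,0) * x (1,0,0) ≠ 0)
    (hD : (x (0,0,0) * x (1,1,1) + x (0,0,1) * x (1,1,0)
            - x (0,1,0) * x (1,0,1) - x (0,1,1) * x (1,0,0))^2
        - 4 * (x (0,0,0) * x (1,1,0) - x (0,1,0) * x (1,0,0))
            * (x (0,0,1) * x (1,1,1) - x (0,1,1) * x (1,0,1)) ≠ 0)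
    (hE : (x (0,0,0) * x (1,1,0) - x (0,1,0) * x (1,0,0)) * x (0,0,1)^2
        - (x (0,0,0) * x (1,1,1) + x (0,0,1) * x (1,1,0)
            - x (0,1,0) * x (1,0,1) - x (0,1,1) * x (1,0,0)) * x (0,0,1) * x (0,0,0)
        + (x (0,0,1) * x (1,1,1) - x (0,1,1) * x (1,0,1)) * x (0,0,0)^2 ≠ 0) :
    ∃ a b c : Fin 2 → Fin 2 → k, ∀ p,
      x p = a 0 p.1 * b 0 p.2.1 * c 0 p.2.2 + a 1 p.1 * b 1 p.2.1 * c 1 p.2.2 := by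
  obtain ⟨A, eA⟩ : ∃ A, x (0,0,0) * x (1,1,0) - x (0,1,0) * x (1,0,0) = A := ⟨_, rfl⟩
  obtain ⟨B, eB⟩ : ∃ B, x (0,0,0) * x (1,1,1) + x (0,0,1) * x (1,1,0)
      - x (0,1,0) * x (1,0,1) - x (0,1,1) * x (1,0,0) = B := ⟨_, rfl⟩
  obtain ⟨C, eC⟩ : ∃ C, x (0,0,1) * x (1,1,1) - x (0,1,1) * x (1,0,1) = C := ⟨_, rfl⟩
  rw [eA] at hA hD hE; rw [eB] at hD hE; rw [eC] at hD hE
  -- find a root of the characteristic quadratic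
  obtain ⟨r0, hr0⟩ := IsAlgClosed.exists_root
    (Polynomial.C A * Polynomial.X ^ 2 + Polynomial.C (-B) * Polynomial.X + Polynomial.C C)
    (by rw [Polynomial.degree_quadratic hA]; exact two_ne_zero)
  have hq0 : A * r0 ^ 2 - B * r0 + C = 0 := by
    have := hr0
    simp only [Polynomial.IsRoot, Polynomial.eval_add, Polynomial.eval_mul,
      Polynomial.eval_pow, Polynomial.eval_C, Polynomial.eval_X] at this
    linear_combination this
  set r1 := B / A - r0 with hr1def
  have hr1 : A * r1 = B - A * r0 := by rw [hr1def]; field_simp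
  have hq1 : A * r1 ^ 2 - B * r1 + C = 0 := by
    have key1 : A * (A * r1 ^ 2 - B * r1 + C) = 0 := by
      linear_combination A * hq0 + (A * r1 - A * r0) * hr1
    rcases mul_eq_zero.mp key1 with h | h
    · exact absurd h hA
    · exact h
  have hne : r1 - r0 ≠ 0 := by
    intro heq
    apply hD
    have hr01 : r1 = r0 := by linear_combination heq
    have hB : B = 2 * A * r0 := by rw [hr01] at hr1; linear_combination -hr1
    have hC : C = A * r0 ^ 2 := by linear_combination hq0 + r0 * hB
    linear_combination (B + 2 * A * r0) * hB - 4 * A * hC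
  -- corner entries are nonzero
  have hEfact : A * x (0,0,1)^2 - B * x (0,0,1) * x (0,0,0) + C * x (0,0,0)^2
      = A * ((x (0,0,1) - r0 * x (0,0,0)) * (x (0,0,1) - r1 * x (0,0,0))) := by
    linear_combination (x (0,0,0) * x (0,0,1) - r0 * x (0,0,0)^2) * hr1 + x (0,0,0)^2 * hq0
  have hcorner : A * ((x (0,0,1) - r0 * x (0,0,0)) * (x (0,0,1) - r1 * x (0,0,0))) ≠ 0 := by
    rw [← hEfact]; exact hE
  have hA0 : x (0,0,1) - r0 * x (0,0,0) ≠ 0 := by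
    intro h; exact hcorner (by rw [h]; ring)
  have hA1 : x (0,0,1) - r1 * x (0,0,0) ≠ 0 := by
    intro h; exact hcorner (by rw [h]; ring)
  refine segre_key x r0 r1 hne hA0 hA1 ?_ ?_
  · linear_combination hq0 + r0^2 * eA - r0 * eB + eC
  · linear_combination hq1 + r1^2 * eA - r1 * eB + eC

end SegreAux

/-- Over an algebraically closed field `k`, the set of tensors of rank at most 2 in
`k² ⊗ k² ⊗ k²` is Zariski dense: every polynomial vanishing on all tensors of the form
`a₀ ⊗ b₀ ⊗ c₀ + a₁ ⊗ b₁ ⊗ c₁` vanishes identically. Equivalently, the second secant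
variety of the Segre embedding of `ℙ¹ × ℙ¹ × ℙ¹` is all of `ℙ⁷`, i.e. every tensor in
`k² ⊗ k² ⊗ k²` has border rank at most 2. -/
theorem secant_of_segre_two_two_two_is_everything
    {k : Type*} [Field k] [IsAlgClosed k]
    (F : MvPolynomial (Fin 2 × Fin 2 × Fin 2) k)
    (hF : ∀ a b c : Fin 2 → Fin 2 → k,
      MvPolynomial.eval
        (fun p => a 0 p.1 * b 0 p.2.1 * c 0 p.2.2 + a 1 p.1 * b 1 p.2.1 * c 1 p.2.2)
        F = 0) :
    F = 0 := by
  classical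
  set G1 : MvPolynomial (Fin 2 × Fin 2 × Fin 2) k :=
    MvPolynomial.X (0,0,0) * MvPolynomial.X (1,1,0)
      - MvPolynomial.X (0,1,0) * MvPolynomial.X (1,0,0) with hG1
  set G2 : MvPolynomial (Fin 2 × Fin 2 × Fin 2) k :=
    (MvPolynomial.X (0,0,0) * MvPolynomial.X (1,1,1) + MvPolynomial.X (0,0,1) * MvPolynomial.X (1,1,0)
      - MvPolynomial.X (0,1,0) * MvPolynomial.X (1,0,1)
      - MvPolynomial.X (0,1,1) * MvPolynomial.X (1,0,0))^2
    - 4 * (MvPolynomial.X (0,0,0) * MvPolynomial.X (1,1,0)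
        - MvPolynomial.X (0,1,0) * MvPolynomial.X (1,0,0))
        * (MvPolynomial.X (0,0,1) * MvPolynomial.X (1,1,1)
        - MvPolynomial.X (0,1,1) * MvPolynomial.X (1,0,1)) with hG2
  set G3 : MvPolynomial (Fin 2 × Fin 2 × Fin 2) k :=
    (MvPolynomial.X (0,0,0) * MvPolynomial.X (1,1,0)
      - MvPolynomial.X (0,1,0) * MvPolynomial.X (1,0,0)) * MvPolynomial.X (0,0,1)^2
    - (MvPolynomial.X (0,0,0) * MvPolynomial.X (1,1,1) + MvPolynomial.X (0,0,1) * MvPolynomial.X (1,1,0)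
        - MvPolynomial.X (0,1,0) * MvPolynomial.X (1,0,1)
        - MvPolynomial.X (0,1,1) * MvPolynomial.X (1,0,0))
        * MvPolynomial.X (0,0,1) * MvPolynomial.X (0,0,0)
    + (MvPolynomial.X (0,0,1) * MvPolynomial.X (1,1,1)
        - MvPolynomial.X (0,1,1) * MvPolynomial.X (1,0,1)) * MvPolynomial.X (0,0,0)^2 with hG3
  have e1 : ∀ x : (Fin 2 × Fin 2 × Fin 2) → k, MvPolynomial.eval x G1 =
      x (0,0,0) * x (1,1,0) - x (0,1,0) * x (1,0,0) := by
    intro x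
    simp only [hG1, map_sub, map_mul, MvPolynomial.eval_X]
  have e2 : ∀ x : (Fin 2 × Fin 2 × Fin 2) → k, MvPolynomial.eval x G2 =
      (x (0,0,0) * x (1,1,1) + x (0,0,1) * x (1,1,0)
        - x (0,1,0) * x (1,0,1) - x (0,1,1) * x (1,0,0))^2
      - 4 * (x (0,0,0) * x (1,1,0) - x (0,1,0) * x (1,0,0))
          * (x (0,0,1) * x (1,1,1) - x (0,1,1) * x (1,0,1)) := by
    intro x
    simp only [hG2, map_sub, map_add, map_mul, map_pow, map_ofNat, MvPolynomial.eval_X]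
  have e3 : ∀ x : (Fin 2 × Fin 2 × Fin 2) → k, MvPolynomial.eval x G3 =
      (x (0,0,0) * x (1,1,0) - x (0,1,0) * x (1,0,0)) * x (0,0,1)^2
      - (x (0,0,0) * x (1,1,1) + x (0,0,1) * x (1,1,0)
          - x (0,1,0) * x (1,0,1) - x (0,1,1) * x (1,0,0)) * x (0,0,1) * x (0,0,0)
      + (x (0,0,1) * x (1,1,1) - x (0,1,1) * x (1,0,1)) * x (0,0,0)^2 := by
    intro x
    simp only [hG3, map_sub, map_add, map_mul, map_pow, MvPolynomial.eval_X]
  have hvan : ∀ x : (Fin 2 × Fin 2 × Fin 2) → k,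
      MvPolynomial.eval x (F * (G1 * G2 * G3)) = 0 := by
    intro x
    rw [map_mul]
    rcases eq_or_ne (MvPolynomial.eval x (G1 * G2 * G3)) 0 with hG | hG
    · rw [hG, mul_zero]
    · rw [map_mul, map_mul] at hG
      obtain ⟨h12, hE⟩ := mul_ne_zero_iff.mp hG
      obtain ⟨hA, hD⟩ := mul_ne_zero_iff.mp h12
      rw [e1 x] at hA; rw [e2 x] at hD; rw [e3 x] at hE
      obtain ⟨a, b, c, hdec⟩ := segre_generic x hA hD hE
      have hx : (fun p : Fin 2 × Fin 2 × Fin 2 =>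
          a 0 p.1 * b 0 p.2.1 * c 0 p.2.2 + a 1 p.1 * b 1 p.2.1 * c 1 p.2.2) = x :=
        funext fun p => (hdec p).symm
      have hzero := hF a b c
      rw [hx] at hzero
      rw [hzero, zero_mul]
  have hFG : F * (G1 * G2 * G3) = 0 :=
    MvPolynomial.funext fun x => by rw [hvan x, map_zero]
  have hG1ne : G1 ≠ 0 := by
    intro h
    have h1 := congrArg (MvPolynomial.eval
      (fun p : Fin 2 × Fin 2 × Fin 2 => ![![![(1:k),0],![0,0]],![![0,0],![1,1]]] p.1 p.2.1 p.2.2)) h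
    rw [e1, map_zero] at h1
    norm_num at h1
  have hG2ne : G2 ≠ 0 := by
    intro h
    have h1 := congrArg (MvPolynomial.eval
      (fun p : Fin 2 × Fin 2 × Fin 2 => ![![![(1:k),0],![0,0]],![![0,0],![1,1]]] p.1 p.2.1 p.2.2)) h
    rw [e2, map_zero] at h1
    norm_num at h1
  have hG3ne : G3 ≠ 0 := by
    intro h
    have h1 := congrArg (MvPolynomial.eval
      (fun p : Fin 2 × Fin 2 × Fin 2 => ![![![(1:k),1],![0,1]],![![0,1],![1,0]]] p.1 p.2.1 p.2.2)) h
    rw [e3, map_zero] at h1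
    norm_num at h1
  rcases mul_eq_zero.mp hFG with h | h
  · exact h
  · exact absurd h (mul_ne_zero (mul_ne_zero hG1ne hG2ne) hG3ne)
end
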